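/- (Lemma 3, single-point Jacobian estimator.) Let f : ℝ^d → ℝ^m be measurable, θ ∈ ℝ^d, α > 0, and let z be an integrable random vector in ℝ^d with E[z] = 0 such that the random d×m matrix z · f(θ + αz)ᵀ is entrywise integrable. Then E[z · (f(θ + αz)/α)ᵀ] = E[z · ((f(θ + αz) − f(θ))/α)ᵀ]. Consequently, if in addition f is differentiable with Jacobian J_f that is L_J-Lipschitz in operator norm, the coordinates of z are mutually independent with mean 0 and variance 1, and E[‖z‖³] < ∞, then ‖E[z · (f(θ + αz)/α)ᵀ] − J_f(θ)ᵀ‖ ≤ (L_J α / 2) · E[‖z‖³] in the operator norm, so the single-point estimator is an unbiased estimator of J_f(θ)ᵀ in the limit α → 0. -/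

import Mathlib

/-! Writing `T := α⁻¹ (f(θ + αz) - f(θ))`, the term `z f(θ)ᵀ` has mean `E[z] f(θ)ᵀ = 0`, which
gives the first identity. For the bound, isotropy `E[z zᵀ] = I` of a vector with independent
standardised coordinates gives `E[z (J z)ᵀ] = E[z zᵀ] Jᵀ = Jᵀ` for `J = J_f(θ)`, and the
first-order Taylor estimate `‖f(θ + h) - f(θ) - J h‖ ≤ L_J ‖h‖² / 2` bounds
`‖z (T - J z)ᵀ‖ ≤ L_J α ‖z‖³ / 2` pointwise. -/

open MeasureTheory ProbabilityTheory
open scoped RealInnerProductSpace BigOperators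

/-- The outer product `u vᵀ` of `u ∈ ℝ^d` and `v ∈ ℝ^m`, viewed as the linear map
`ℝ^m → ℝ^d`, `e ↦ ⟪v, e⟫ • u`, equipped with the operator norm induced by the
Euclidean norms. -/
noncomputable def outerCLM {d m : ℕ} (u : EuclideanSpace ℝ (Fin d))
    (v : EuclideanSpace ℝ (Fin m)) :
    EuclideanSpace ℝ (Fin m) →L[ℝ] EuclideanSpace ℝ (Fin d) :=
  (innerSL ℝ v).smulRight u

open ContinuousLinearMap

theorem norm_sub_sub_fderiv_apply_le {E F : Type*} [NormedAddCommGroup E] [NormedSpace ℝ E]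
    [NormedAddCommGroup F] [NormedSpace ℝ F] {f : E → F} {L : ℝ} (hf : Differentiable ℝ f)
    (x : E) (hLip : ∀ y, ‖fderiv ℝ f y - fderiv ℝ f x‖ ≤ L * ‖y - x‖) (h : E) :
    ‖f (x + h) - f x - fderiv ℝ f x h‖ ≤ L / 2 * ‖h‖ ^ 2 := by
  have hderiv : ∀ t : ℝ, HasDerivAt (fun t : ℝ => f (x + t • h) - f x - t • fderiv ℝ f x h)
      (fderiv ℝ f (x + t • h) h - fderiv ℝ f x h) t := by
    intro t
    have hline : HasDerivAt (fun t : ℝ => x + t • h) h t := by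
      simpa using ((hasDerivAt_id t).smul_const h).const_add x
    have := (((hf _).hasFDerivAt.comp_hasDerivAt t hline).sub_const (f x)).sub
      ((hasDerivAt_id' t).smul_const (fderiv ℝ f x h))
    rw [one_smul] at this
    exact this
  have hbound : ∀ t ∈ Set.Ico (0 : ℝ) 1,
      ‖fderiv ℝ f (x + t • h) h - fderiv ℝ f x h‖ ≤ L * ‖h‖ ^ 2 * t := by
    rintro t ⟨ht, -⟩
    calc ‖fderiv ℝ f (x + t • h) h - fderiv ℝ f x h‖
        ≤ ‖fderiv ℝ f (x + t • h) - fderiv ℝ f x‖ * ‖h‖ := by rw [← sub_apply]; exact le_opNorm _ _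
      _ ≤ L * ‖x + t • h - x‖ * ‖h‖ := by gcongr; exact hLip _
      _ = L * ‖h‖ ^ 2 * t := by
        rw [add_sub_cancel_left, norm_smul, Real.norm_eq_abs, abs_of_nonneg ht]; ring
  have hB : ∀ t : ℝ, HasDerivAt (fun t : ℝ => L / 2 * ‖h‖ ^ 2 * t ^ 2) (L * ‖h‖ ^ 2 * t) t := by
    intro t
    exact ((hasDerivAt_pow 2 t).const_mul (L / 2 * ‖h‖ ^ 2)).congr_deriv (by push_cast; ring)
  simpa using image_norm_le_of_norm_deriv_right_le_deriv_boundary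
    (fun t _ => (hderiv t).continuousAt.continuousWithinAt)
    (fun t _ => (hderiv t).hasDerivWithinAt) (by simp) hB hbound (Set.right_mem_Icc.2 zero_le_one)

section Outer

variable {d m : ℕ}

noncomputable def outerL : EuclideanSpace ℝ (Fin d) →L[ℝ] EuclideanSpace ℝ (Fin m) →L[ℝ]
    (EuclideanSpace ℝ (Fin m) →L[ℝ] EuclideanSpace ℝ (Fin d)) :=
  ((smulRightL ℝ _ _).comp (innerSL ℝ).toContinuousLinearMap).flip

theorem outerL_apply (u : EuclideanSpace ℝ (Fin d)) (v : EuclideanSpace ℝ (Fin m)) :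
    outerL u v = outerCLM u v :=
  rfl

@[simp]
theorem outerCLM_apply (u : EuclideanSpace ℝ (Fin d)) (v e : EuclideanSpace ℝ (Fin m)) :
    outerCLM u v e = ⟪v, e⟫ • u :=
  rfl

theorem outerCLM_zero_left (v : EuclideanSpace ℝ (Fin m)) :
    outerCLM (0 : EuclideanSpace ℝ (Fin d)) v = 0 := by
  rw [← outerL_apply, map_zero, zero_apply]

theorem outerCLM_smul_right (u : EuclideanSpace ℝ (Fin d)) (c : ℝ)
    (v : EuclideanSpace ℝ (Fin m)) : outerCLM u (c • v) = c • outerCLM u v :=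
  (outerL u).map_smul c v

theorem outerCLM_sub_right (u : EuclideanSpace ℝ (Fin d)) (v w : EuclideanSpace ℝ (Fin m)) :
    outerCLM u (v - w) = outerCLM u v - outerCLM u w :=
  (outerL u).map_sub v w

theorem norm_outerCLM (u : EuclideanSpace ℝ (Fin d)) (v : EuclideanSpace ℝ (Fin m)) :
    ‖outerCLM u v‖ = ‖v‖ * ‖u‖ := by
  rw [outerCLM, norm_smulRight_apply, innerSL_apply_norm]

theorem outerCLM_apply_eq_comp_adjoint (u : EuclideanSpace ℝ (Fin d))
    (A : EuclideanSpace ℝ (Fin d) →L[ℝ] EuclideanSpace ℝ (Fin m)) :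
    outerCLM u (A u) = (outerCLM u u).comp (adjoint A) := by
  ext1 v
  simp [adjoint_inner_right]

theorem norm_outerCLM_sub_outerCLM_fderiv_le {f : EuclideanSpace ℝ (Fin d) →
    EuclideanSpace ℝ (Fin m)} {L α : ℝ} (hf : Differentiable ℝ f) (θ : EuclideanSpace ℝ (Fin d))
    (hLip : ∀ y, ‖fderiv ℝ f y - fderiv ℝ f θ‖ ≤ L * ‖y - θ‖) (hα : 0 < α)
    (u : EuclideanSpace ℝ (Fin d)) :
    ‖outerCLM u (α⁻¹ • (f (θ + α • u) - f θ)) - outerCLM u (fderiv ℝ f θ u)‖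
      ≤ L * α / 2 * ‖u‖ ^ 3 := by
  have hrescale : α⁻¹ • (f (θ + α • u) - f θ) - fderiv ℝ f θ u
      = α⁻¹ • (f (θ + α • u) - f θ - fderiv ℝ f θ (α • u)) := by
    rw [map_smul, smul_sub _ _ (α • _), inv_smul_smul₀ hα.ne']
  rw [← outerCLM_sub_right, norm_outerCLM, hrescale, norm_smul, Real.norm_of_nonneg (by positivity)]
  calc α⁻¹ * ‖f (θ + α • u) - f θ - fderiv ℝ f θ (α • u)‖ * ‖u‖
      ≤ α⁻¹ * (L / 2 * ‖α • u‖ ^ 2) * ‖u‖ := by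
        gcongr; exact norm_sub_sub_fderiv_apply_le hf θ hLip _
    _ = L * α / 2 * ‖u‖ ^ 3 := by
        rw [norm_smul, Real.norm_of_nonneg hα.le]; field_simp

end Outer

section Moments

variable {Ω : Type*} [MeasurableSpace Ω] {μ : Measure Ω}

theorem integral_mul_eq_ite_of_iIndepFun {ι : Type*} [DecidableEq ι] {X : ι → Ω → ℝ}
    (hX : ∀ i, AEStronglyMeasurable (X i) μ) (hindep : iIndepFun X μ)
    (hmean : ∀ i, ∫ ω, X i ω ∂μ = 0) (hvar : ∀ i, ∫ ω, X i ω ^ 2 ∂μ = 1) (i j : ι) :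
    ∫ ω, X i ω * X j ω ∂μ = if i = j then 1 else 0 := by
  rcases eq_or_ne i j with rfl | hij
  · simpa [← sq] using hvar i
  · rw [if_neg hij]
    simpa [hmean] using (hindep.indepFun hij).integral_mul_eq_mul_integral (hX i) (hX j)

variable {d m : ℕ} {z : Ω → EuclideanSpace ℝ (Fin d)}

theorem integral_outerCLM_const_right (hz : Integrable z μ) (v : EuclideanSpace ℝ (Fin m)) :
    ∫ ω, outerCLM (z ω) v ∂μ = outerCLM (∫ ω, z ω ∂μ) v :=
  (outerL.flip v).integral_comp_comm hz

theorem integrable_outerCLM_self (hz : MemLp z 2 μ) :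
    Integrable (fun ω => outerCLM (z ω) (z ω)) μ :=
  (hz.integrable_norm_pow two_ne_zero).mono'
    (outerL.continuous₂.comp_aestronglyMeasurable₂ hz.1 hz.1)
    (ae_of_all _ fun ω => (norm_outerCLM (z ω) (z ω)).trans (sq _).symm |>.le)

theorem integrable_outerCLM_apply (hz : MemLp z 2 μ)
    (A : EuclideanSpace ℝ (Fin d) →L[ℝ] EuclideanSpace ℝ (Fin m)) :
    Integrable (fun ω => outerCLM (z ω) (A (z ω))) μ := by
  simp_rw [outerCLM_apply_eq_comp_adjoint]
  exact ((compL ℝ _ _ _).flip (adjoint A)).integrable_comp (integrable_outerCLM_self hz)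

theorem integral_outerCLM_self_eq_id (hz : MemLp z 2 μ)
    (hiso : ∀ i j, ∫ ω, z ω i * z ω j ∂μ = if i = j then 1 else 0) :
    ∫ ω, outerCLM (z ω) (z ω) ∂μ = ContinuousLinearMap.id ℝ _ := by
  ext1 v
  refine PiLp.ext fun i => ?_
  have hexpand : ∀ ω, outerCLM (z ω) (z ω) v i = ∑ k, v k * (z ω k * z ω i) := fun ω => by
    simp only [outerCLM_apply, PiLp.smul_apply, smul_eq_mul, PiLp.inner_apply,
      RCLike.inner_apply, conj_trivial, Finset.sum_mul]
    exact Finset.sum_congr rfl fun k _ => by ring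
  rw [integral_apply (integrable_outerCLM_self hz),
    eval_integral_piLp ((integrable_outerCLM_self hz).apply_continuousLinearMap v).eval_piLp]
  simp only [hexpand]
  rw [integral_finsetSum _ fun k _ => ?_]
  · simp [integral_const_mul, hiso]
  · exact ((hz.eval_piLp k).integrable_mul (hz.eval_piLp i)).const_mul (v k)

theorem integral_outerCLM_apply_eq_adjoint (hz : MemLp z 2 μ)
    (hiso : ∀ i j, ∫ ω, z ω i * z ω j ∂μ = if i = j then 1 else 0)
    (A : EuclideanSpace ℝ (Fin d) →L[ℝ] EuclideanSpace ℝ (Fin m)) :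
    ∫ ω, outerCLM (z ω) (A (z ω)) ∂μ = adjoint A := by
  calc ∫ ω, outerCLM (z ω) (A (z ω)) ∂μ
      = ∫ ω, (compL ℝ _ _ _).flip (adjoint A) (outerCLM (z ω) (z ω)) ∂μ := by
        simp_rw [outerCLM_apply_eq_comp_adjoint]; rfl
    _ = (∫ ω, outerCLM (z ω) (z ω) ∂μ).comp (adjoint A) :=
        integral_comp_comm _ (integrable_outerCLM_self hz)
    _ = adjoint A := by rw [integral_outerCLM_self_eq_id hz hiso, id_comp]

end Moments

theorem stmt5_general {Ω : Type*} [MeasurableSpace Ω] {μ : Measure Ω} [IsProbabilityMeasure μ]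
    {d m : ℕ} (f : EuclideanSpace ℝ (Fin d) → EuclideanSpace ℝ (Fin m))
    (θ : EuclideanSpace ℝ (Fin d)) (α : ℝ) (hα : 0 < α)
    (z : Ω → EuclideanSpace ℝ (Fin d))
    (hzint : Integrable z μ)
    (hzmean : ∫ ω, z ω ∂μ = 0)
    (hint : Integrable (fun ω => outerCLM (z ω) (f (θ + α • z ω))) μ) :
    (∫ ω, outerCLM (z ω) (α⁻¹ • f (θ + α • z ω)) ∂μ
        = ∫ ω, outerCLM (z ω) (α⁻¹ • (f (θ + α • z ω) - f θ)) ∂μ)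
    ∧ (∀ L_J : ℝ, Differentiable ℝ f →
        (∀ x y, ‖fderiv ℝ f x - fderiv ℝ f y‖ ≤ L_J * ‖x - y‖) →
        iIndepFun (fun i ω => z ω i) μ →
        (∀ i, ∫ ω, z ω i ∂μ = 0) →
        (∀ i, ∫ ω, (z ω i) ^ 2 ∂μ = 1) →
        Integrable (fun ω => ‖z ω‖ ^ 3) μ →
        ‖(∫ ω, outerCLM (z ω) (α⁻¹ • f (θ + α • z ω)) ∂μ)
            - ContinuousLinearMap.adjoint (fderiv ℝ f θ)‖
          ≤ L_J * α / 2 * ∫ ω, ‖z ω‖ ^ 3 ∂μ) := by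
  have hconst : Integrable (fun ω => outerCLM (z ω) (f θ)) μ :=
    (outerL.flip (f θ)).integrable_comp hzint
  have hquot : Integrable (fun ω => outerCLM (z ω) (α⁻¹ • (f (θ + α • z ω) - f θ))) μ := by
    simp_rw [outerCLM_smul_right, outerCLM_sub_right]
    exact (hint.sub hconst).smul α⁻¹
  have hunbiased : ∫ ω, outerCLM (z ω) (α⁻¹ • f (θ + α • z ω)) ∂μ
      = ∫ ω, outerCLM (z ω) (α⁻¹ • (f (θ + α • z ω) - f θ)) ∂μ := by
    simp_rw [outerCLM_smul_right, outerCLM_sub_right]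
    rw [integral_smul, integral_smul, integral_sub hint hconst, integral_outerCLM_const_right hzint,
      hzmean, outerCLM_zero_left, sub_zero]
  refine ⟨hunbiased, fun L hf hLip hindep hmean hvar hz3 => ?_⟩
  have hz2 : MemLp z 2 μ :=
    (memLp_two_iff_integrable_sq_norm hzint.1).2
      (integrable_norm_pow_of_le hzint.1 (by norm_num) hz3)
  have hiso : ∀ i j, ∫ ω, z ω i * z ω j ∂μ = if i = j then 1 else 0 :=
    integral_mul_eq_ite_of_iIndepFun (X := fun i ω => z ω i)
      (fun i => (hzint.eval_piLp i).1) hindep hmean hvar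
  calc ‖(∫ ω, outerCLM (z ω) (α⁻¹ • f (θ + α • z ω)) ∂μ) - adjoint (fderiv ℝ f θ)‖
      = ‖∫ ω, (outerCLM (z ω) (α⁻¹ • (f (θ + α • z ω) - f θ))
          - outerCLM (z ω) (fderiv ℝ f θ (z ω))) ∂μ‖ := by
        rw [hunbiased, ← integral_outerCLM_apply_eq_adjoint hz2 hiso (fderiv ℝ f θ),
          integral_sub hquot (integrable_outerCLM_apply hz2 _)]
    _ ≤ ∫ ω, L * α / 2 * ‖z ω‖ ^ 3 ∂μ :=
        norm_integral_le_of_norm_le (hz3.const_mul _) (ae_of_all _ fun ω =>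
          norm_outerCLM_sub_outerCLM_fderiv_le hf θ (fun y => hLip y θ) hα (z ω))
    _ = L * α / 2 * ∫ ω, ‖z ω‖ ^ 3 ∂μ := integral_const_mul _ _

/-- **Lemma 3, single-point Jacobian estimator.** If `E[z] = 0` and
`z f(θ+αz)ᵀ` is integrable, then `E[z (f(θ+αz)/α)ᵀ] = E[z ((f(θ+αz)-f(θ))/α)ᵀ]`.
Consequently, if moreover `f` is differentiable with `L_J`-Lipschitz Jacobian,
the coordinates of `z` are mutually independent with mean `0` and variance `1`,
and `E[‖z‖³] < ∞`, then
`‖E[z (f(θ+αz)/α)ᵀ] - J_f(θ)ᵀ‖ ≤ (L_J α / 2) E[‖z‖³]` in operator norm. -/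
theorem stmt5 {Ω : Type*} [MeasurableSpace Ω] {μ : Measure Ω} [IsProbabilityMeasure μ]
    {d m : ℕ} (f : EuclideanSpace ℝ (Fin d) → EuclideanSpace ℝ (Fin m))
    (hfmeas : Measurable f)
    (θ : EuclideanSpace ℝ (Fin d)) (α : ℝ) (hα : 0 < α)
    (z : Ω → EuclideanSpace ℝ (Fin d)) (hzm : Measurable z)
    (hzint : Integrable z μ)
    (hzmean : ∫ ω, z ω ∂μ = 0)
    (hint : Integrable (fun ω => outerCLM (z ω) (f (θ + α • z ω))) μ) :
    (∫ ω, outerCLM (z ω) (α⁻¹ • f (θ + α • z ω)) ∂μ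
        = ∫ ω, outerCLM (z ω) (α⁻¹ • (f (θ + α • z ω) - f θ)) ∂μ)
    ∧ (∀ L_J : ℝ, Differentiable ℝ f →
        (∀ x y, ‖fderiv ℝ f x - fderiv ℝ f y‖ ≤ L_J * ‖x - y‖) →
        iIndepFun (fun i ω => z ω i) μ →
        (∀ i, ∫ ω, z ω i ∂μ = 0) →
        (∀ i, ∫ ω, (z ω i) ^ 2 ∂μ = 1) →
        Integrable (fun ω => ‖z ω‖ ^ 3) μ →
        ‖(∫ ω, outerCLM (z ω) (α⁻¹ • f (θ + α • z ω)) ∂μ)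
            - ContinuousLinearMap.adjoint (fderiv ℝ f θ)‖
          ≤ L_J * α / 2 * ∫ ω, ‖z ω‖ ^ 3 ∂μ) :=
  stmt5_general f θ α hα z hzint hzmean hint
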